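/- Under the extension setup (S a based scheme on Z with closed subset T̃, based morphism i: U → S with iπ: U → S//T̃ an isomorphism, and Condition (*): |t(ui)| = 1 for all u ∈ U and t ∈ T̃), suppose p, q, r ∈ U with r ∈ pq, and z₁, z₃ ∈ Z with z₃ ∈ z₁(ri). Let y₁, y₃ ∈ Y be the elements with z₁T̃ = (y₁i)T̃ and z₃T̃ = (y₃i)T̃. Then for every y₂ ∈ y₁p ∩ y₃q*, there exists z₂ ∈ z₁(pi) ∩ z₃(qi)* with z₂T̃ = (y₂i)T̃. Moreover, the structure constants satisfy a_{(pi)(qi)(ri)} = a_{pqr} · n_{T̃''_p ∩ T̃'_q}. -/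
import Mathlib


/-!
Common framework for association schemes, following the paper
"A new semidirect product for association schemes".
-/

/-- The diagonal relation `1_X` on a set `X`. -/
def diagRel (X : Type) : Set (X × X) := {w | w.1 = w.2}

/-- The transpose `s*` of a relation. -/
def transp {X : Type} (s : Set (X × X)) : Set (X × X) := Prod.swap '' s

/-- The structure constant `a_{pqr}`: for `(x,y) ∈ r`, the number of `z` with
`(x,z) ∈ p` and `(z,y) ∈ q` (well-defined for elements of a scheme). -/
noncomputable def aC {X : Type} (p q r : Set (X × X)) : ℕ :=
  sSup {n | ∃ w ∈ r, n = Nat.card {z : X // (w.1, z) ∈ p ∧ (z, w.2) ∈ q}}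

/-- `S` is an association scheme on `X`. -/
def IsScheme {X : Type} (S : Set (Set (X × X))) : Prop :=
  (∀ s ∈ S, s.Nonempty) ∧
  (∀ w : X × X, ∃! s, s ∈ S ∧ w ∈ s) ∧
  diagRel X ∈ S ∧
  (∀ s ∈ S, transp s ∈ S) ∧
  (∀ p ∈ S, ∀ q ∈ S, ∀ r ∈ S, ∀ w ∈ r,
    Nat.card {z : X // (w.1, z) ∈ p ∧ (z, w.2) ∈ q} = aC p q r)

/-- Complex product of two relations relative to a scheme `S`:
`pq = {r ∈ S : a_{pqr} > 0}`. -/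
noncomputable def cmulS {X : Type} (S : Set (Set (X × X))) (p q : Set (X × X)) :
    Set (Set (X × X)) :=
  {r | r ∈ S ∧ 0 < aC p q r}

/-- Complex product of two subsets of a scheme. -/
noncomputable def setMulS {X : Type} (S : Set (Set (X × X)))
    (Pp Qq : Set (Set (X × X))) : Set (Set (X × X)) :=
  ⋃ p ∈ Pp, ⋃ q ∈ Qq, cmulS S p q

/-- `T` is a closed subset of the scheme `S` (i.e. `T ⊆ S` and `T*T ⊆ T`). -/
def IsClosedIn {X : Type} (S T : Set (Set (X × X))) : Prop :=
  T ⊆ S ∧ ∀ p ∈ T, ∀ q ∈ T, cmulS S (transp p) q ⊆ T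

/-- `T` is a normal subset of the scheme `S` (i.e. `pT = Tp` for all `p ∈ S`). -/
noncomputable def IsNormalIn {X : Type} (S T : Set (Set (X × X))) : Prop :=
  ∀ p ∈ S, setMulS S {p} T = setMulS S T {p}

/-- `xs = {y : (x,y) ∈ s}`. -/
def pimg {X : Type} (s : Set (X × X)) (x : X) : Set X := {y | (x, y) ∈ s}

/-- The coset `xT` of a (closed) subset `T` of a scheme. -/
def coset {X : Type} (T : Set (Set (X × X))) (x : X) : Set X :=
  {y | ∃ t ∈ T, (x, y) ∈ t}

/-- The set `X/T` of cosets. -/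
def cosets {X : Type} (T : Set (Set (X × X))) : Set (Set X) :=
  {C | ∃ x, C = coset T x}

/-- The quotient relation `s^T` on cosets. -/
def quotRel {X : Type} (T : Set (Set (X × X))) (s : Set (X × X)) :
    Set (Set X × Set X) :=
  {w | ∃ x₁ x₂, w = (coset T x₁, coset T x₂) ∧
    ∃ p ∈ s, p.1 ∈ coset T x₁ ∧ p.2 ∈ coset T x₂}

/-- The relations of the quotient scheme `S//T`. -/
def quotS {X : Type} (S T : Set (Set (X × X))) : Set (Set (Set X × Set X)) :=
  {r | ∃ s ∈ S, r = quotRel T s}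

/-- A presentation of a (based) scheme: a set of points inside an ambient type,
a set of relations, and a basepoint. -/
structure Pres (P : Type) where
  pts : Set P
  rels : Set (Set (P × P))
  base : P

/-- A scheme `S` on the whole of `X`, based at `x0`, as a presentation. -/
def fullPres {X : Type} (S : Set (Set (X × X))) (x0 : X) : Pres X :=
  ⟨Set.univ, S, x0⟩

/-- The quotient scheme `S//T` on `X/T`, based at `x0 T`, as a presentation. -/
def quotPres {X : Type} (S T : Set (Set (X × X))) (x0 : X) : Pres (Set X) :=
  ⟨cosets T, quotS S T, coset T x0⟩

/-- The subscheme of a scheme defined by the coset `xT` of a closed subset `T`,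
as a presentation. -/
def subPres {X : Type} (T : Set (Set (X × X))) (x : X) : Pres X :=
  ⟨coset T x, {r | ∃ t ∈ T, r = t ∩ (coset T x ×ˢ coset T x)}, x⟩

/-- `f` is a morphism of schemes between two presentations: it maps points to
points, and pairs lying in the same relation to pairs lying in the same relation. -/
def IsMorOn {P Q : Type} (A : Pres P) (B : Pres Q) (f : P → Q) : Prop :=
  Set.MapsTo f A.pts B.pts ∧
  ∀ s ∈ A.rels, ∀ w ∈ s, ∀ w' ∈ s,
    ∃ t ∈ B.rels, (f w.1, f w.2) ∈ t ∧ (f w'.1, f w'.2) ∈ t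

/-- The induced map on scheme elements sends `s` to `t` (i.e. `s φ_S = t`):
every pair of `s` is mapped into `t`. -/
def elemMapsTo {P Q : Type} (f : P → Q) (s : Set (P × P)) (t : Set (Q × Q)) : Prop :=
  ∀ w ∈ s, (f w.1, f w.2) ∈ t

/-- `f` is an isomorphism of schemes: a morphism which is bijective on points and
whose induced map on scheme elements is bijective. -/
def IsIsoOn {P Q : Type} (A : Pres P) (B : Pres Q) (f : P → Q) : Prop :=
  IsMorOn A B f ∧ Set.BijOn f A.pts B.pts ∧
  ∀ t ∈ B.rels, ∃! s, s ∈ A.rels ∧ elemMapsTo f s t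

/-- A based isomorphism of schemes. -/
def IsBasedIsoOn {P Q : Type} (A : Pres P) (B : Pres Q) (f : P → Q) : Prop :=
  IsIsoOn A B f ∧ f A.base = B.base

/-- A based association scheme on a finite based set. -/
structure BScheme : Type 1 where
  X : Type
  fin : Fintype X
  base : X
  S : Set (Set (X × X))
  isScheme : IsScheme S

/-- A morphism in the category 𝒞: a normal closed subset on each side together
with a based isomorphism between the corresponding quotient schemes. -/
structure HomC (A B : BScheme) where
  TN : Set (Set (A.X × A.X))
  UN : Set (Set (B.X × B.X))
  TN_cl : IsClosedIn A.S TN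
  TN_n : IsNormalIn A.S TN
  UN_cl : IsClosedIn B.S UN
  UN_n : IsNormalIn B.S UN
  f : Set A.X → Set B.X
  iso : IsBasedIsoOn (quotPres A.S TN A.base) (quotPres B.S UN B.base) f

/-- `t^{T_φ} φ̃ = u^{U_φ}`: the induced map on quotient scheme elements sends
the class of `t` to the class of `u`. -/
def elemRel {A B : BScheme} (φ : HomC A B) (t : Set (A.X × A.X))
    (u : Set (B.X × B.X)) : Prop :=
  elemMapsTo φ.f (quotRel φ.TN t) (quotRel φ.UN u)

/-- The normal closed subset `T_{φψ}` of the composite. -/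
def Tcomp {A B C : BScheme} (φ : HomC A B) (ψ : HomC B C) :
    Set (Set (A.X × A.X)) :=
  {t | t ∈ A.S ∧ ∃ u ∈ B.S, elemRel φ t u ∧ elemRel ψ u (diagRel C.X)}

/-- The normal closed subset `V_{φψ}` of the composite. -/
def Vcomp {A B C : BScheme} (φ : HomC A B) (ψ : HomC B C) :
    Set (Set (C.X × C.X)) :=
  {v | v ∈ C.S ∧ ∃ u ∈ B.S, elemRel φ (diagRel A.X) u ∧ elemRel ψ u v}

/-- `ρ` is a composite of `φ` and `ψ` in the category 𝒞. -/
def IsComposite {A B C : BScheme} (φ : HomC A B) (ψ : HomC B C) (ρ : HomC A C) : Prop :=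
  ρ.TN = Tcomp φ ψ ∧ ρ.UN = Vcomp φ ψ ∧
  ∀ (x : A.X) (y : B.X) (z : C.X),
    φ.f (coset φ.TN x) = coset φ.UN y →
    ψ.f (coset ψ.TN y) = coset ψ.UN z →
    ρ.f (coset (Tcomp φ ψ) x) = coset (Vcomp φ ψ) z

/-- The identity morphism of 𝒞 at `A`: both normal closed subsets are `{1_X}`
and the isomorphism is the identity of `A//{1_X}`. -/
def IsIdHom {A : BScheme} (ι : HomC A A) : Prop :=
  ι.TN = {diagRel A.X} ∧ ι.UN = {diagRel A.X} ∧
  ∀ x : A.X, ι.f (coset {diagRel A.X} x) = coset {diagRel A.X} x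

/-- A `τ_T`-scheme on the based set underlying `T`. -/
structure TauSchemeOn (T : BScheme) where
  rels : Set (Set (T.X × T.X))
  isScheme : IsScheme rels
  alpha : Set (T.X × T.X) → Set (T.X × T.X)
  alpha_bij : Set.BijOn alpha T.S rels
  alpha_one : alpha (diagRel T.X) = diagRel T.X
  alpha_star : ∀ p ∈ T.S, alpha (transp p) = transp (alpha p)
  alpha_const : ∀ p ∈ T.S, ∀ q ∈ T.S, ∀ r ∈ T.S,
    aC p q r = aC (alpha p) (alpha q) (alpha r)

/-- The based scheme underlying a `τ`-scheme. -/
abbrev TauSchemeOn.toB {T : BScheme} (Z : TauSchemeOn T) : BScheme :=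
  ⟨T.X, T.fin, T.base, Z.rels, Z.isScheme⟩

/-- An action `ζ` of a based scheme `U` on a based scheme `T`. -/
structure SchemeAction (U T : BScheme) where
  /-- the `τ`-scheme `ζ_y = (T_y, α^y)` for each `y ∈ Y` -/
  Z : U.X → TauSchemeOn T
  /-- the morphism `ζ_{y₁}^{y₂} ∈ Hom_𝒞(T_{y₁}, T_{y₂})` -/
  hom : ∀ y1 y2 : U.X, HomC (Z y1).toB (Z y2).toB
  /-- (1) `T_{y*} = T` -/
  base_rels : (Z U.base).rels = T.S
  /-- (1) `α^{y*} = id` -/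
  base_alpha : ∀ p, (Z U.base).alpha p = p
  /-- (2) `ζ_y^y` is the identity morphism -/
  hom_refl_TN : ∀ y : U.X, (hom y y).TN = {diagRel T.X}
  hom_refl_UN : ∀ y : U.X, (hom y y).UN = {diagRel T.X}
  hom_refl_f : ∀ (y : U.X) (x : T.X),
    (hom y y).f (coset {diagRel T.X} x) = coset {diagRel T.X} x
  /-- (3) `ζ_{y₂}^{y₁} = (ζ_{y₁}^{y₂})*` -/
  hom_symm_TN : ∀ y1 y2 : U.X, (hom y2 y1).TN = (hom y1 y2).UN
  hom_symm_UN : ∀ y1 y2 : U.X, (hom y2 y1).UN = (hom y1 y2).TN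
  hom_symm_f : ∀ y1 y2 : U.X,
    Set.InvOn (hom y2 y1).f (hom y1 y2).f
      (cosets (hom y1 y2).TN) (cosets (hom y1 y2).UN)
  /-- (4) `ζ_{y₁}^{y₂}(τ)` depends only on the element `u ∈ U` containing `(y₁,y₂)` -/
  zeta_welldef : ∀ u ∈ U.S, ∀ y1 y2 y1' y2' : U.X, (y1, y2) ∈ u → (y1', y2') ∈ u →
    ∀ Pp : Set (Set (T.X × T.X)),
      {u' | u' ∈ T.S ∧ ∃ t ∈ Pp,
        elemRel (hom y1 y2) ((Z y1).alpha t) ((Z y2).alpha u')} =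
      {u' | u' ∈ T.S ∧ ∃ t ∈ Pp,
        elemRel (hom y1' y2') ((Z y1').alpha t) ((Z y2').alpha u')}
  /-- (5) `ζ_{y₁}^{y₃} ≤ ζ_{y₁}^{y₂} ζ_{y₂}^{y₃}` -/
  le_comp : ∀ y1 y2 y3 : U.X,
    (hom y1 y3).TN ⊆ Tcomp (hom y1 y2) (hom y2 y3) ∧
    (hom y1 y3).UN ⊆ Vcomp (hom y1 y2) (hom y2 y3) ∧
    ∀ x x2 x3 : T.X,
      (hom y1 y2).f (coset (hom y1 y2).TN x) = coset (hom y1 y2).UN x2 →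
      (hom y2 y3).f (coset (hom y2 y3).TN x2) = coset (hom y2 y3).UN x3 →
      (hom y1 y3).f (coset (hom y1 y3).TN x) ⊆
        coset (Vcomp (hom y1 y2) (hom y2 y3)) x3

/-- The map `ζ_u` on subsets of `τ` induced by any `(y₁,y₂) ∈ u`. -/
def SchemeAction.zetaU {U T : BScheme} (act : SchemeAction U T)
    (u : Set (U.X × U.X)) (Pp : Set (Set (T.X × T.X))) : Set (Set (T.X × T.X)) :=
  {u' | ∃ y1 y2 : U.X, (y1, y2) ∈ u ∧ u' ∈ T.S ∧
    ∃ t ∈ Pp, elemRel (act.hom y1 y2) ((act.Z y1).alpha t) ((act.Z y2).alpha u')}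

/-- The relation `[u,t]` on `Y × X`. -/
def SchemeAction.rel {U T : BScheme} (act : SchemeAction U T)
    (u : Set (U.X × U.X)) (t : Set (T.X × T.X)) :
    Set ((U.X × T.X) × (U.X × T.X)) :=
  {w | (w.1.1, w.2.1) ∈ u ∧
    ((act.hom w.1.1 w.2.1).f (coset (act.hom w.1.1 w.2.1).TN w.1.2),
      coset (act.hom w.1.1 w.2.1).UN w.2.2) ∈
      quotRel (act.hom w.1.1 w.2.1).UN ((act.Z w.2.1).alpha t)}

/-- The semidirect product `U ⋉_ζ T` as a set of relations on `Y × X`. -/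
def SchemeAction.sdp {U T : BScheme} (act : SchemeAction U T) :
    Set (Set ((U.X × T.X) × (U.X × T.X))) :=
  {r | ∃ u ∈ U.S, ∃ t ∈ T.S, r = act.rel u t}

/-- The valency `n_s = a_{s s* 1}` of a relation. -/
noncomputable def nval {X : Type} (s : Set (X × X)) : ℕ :=
  aC s (transp s) (diagRel X)

section SchemeAux

variable {X : Type}

lemma mem_transp {s : Set (X × X)} {a b : X} : (a, b) ∈ transp s ↔ (b, a) ∈ s := by
  constructor
  · rintro ⟨⟨c, d⟩, hcd, h⟩
    have h1 : d = a := congrArg Prod.fst h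
    have h2 : c = b := congrArg Prod.snd h
    subst h1; subst h2; exact hcd
  · intro h; exact ⟨(b, a), h, rfl⟩

lemma transp_transp (s : Set (X × X)) : transp (transp s) = s := by
  ext ⟨a, b⟩; simp [mem_transp]

lemma mem_diagRel {a b : X} : (a, b) ∈ diagRel X ↔ a = b := Iff.rfl

lemma transp_diagRel : transp (diagRel X) = diagRel X := by
  ext ⟨a, b⟩
  simp only [mem_transp, mem_diagRel]
  exact eq_comm

variable {S : Set (Set (X × X))}

lemma IsScheme.exists_rel (hS : IsScheme S) (w : X × X) : ∃ s, s ∈ S ∧ w ∈ s :=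
  (hS.2.1 w).exists

lemma IsScheme.rel_unique (hS : IsScheme S) {s s' : Set (X × X)} {w : X × X}
    (hs : s ∈ S) (hs' : s' ∈ S) (hw : w ∈ s) (hw' : w ∈ s') : s = s' := by
  obtain ⟨u, -, hu⟩ := hS.2.1 w
  rw [hu s ⟨hs, hw⟩, hu s' ⟨hs', hw'⟩]

lemma IsScheme.transp_mem (hS : IsScheme S) {s : Set (X × X)} (hs : s ∈ S) :
    transp s ∈ S := hS.2.2.2.1 s hs

lemma IsScheme.card_eq (hS : IsScheme S) {p q r : Set (X × X)}
    (hp : p ∈ S) (hq : q ∈ S) (hr : r ∈ S) {x y : X} (hxy : (x, y) ∈ r) :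
    Nat.card {z : X // (x, z) ∈ p ∧ (z, y) ∈ q} = aC p q r :=
  hS.2.2.2.2 p hp q hq r hr (x, y) hxy

lemma IsScheme.exists_mid (hS : IsScheme S) {p q r : Set (X × X)}
    (hp : p ∈ S) (hq : q ∈ S) (hr : r ∈ S) (hpos : 0 < aC p q r)
    {x y : X} (hxy : (x, y) ∈ r) : ∃ z, (x, z) ∈ p ∧ (z, y) ∈ q := by
  have h := hS.card_eq hp hq hr hxy
  rw [← h] at hpos
  obtain ⟨⟨z, hz⟩⟩ := (Nat.card_pos_iff.mp hpos).1
  exact ⟨z, hz⟩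

lemma IsScheme.aC_pos [Finite X] (hS : IsScheme S) {p q r : Set (X × X)}
    (hp : p ∈ S) (hq : q ∈ S) (hr : r ∈ S) {x z y : X}
    (h1 : (x, z) ∈ p) (h2 : (z, y) ∈ q) (h3 : (x, y) ∈ r) : 0 < aC p q r := by
  rw [← hS.card_eq hp hq hr h3]
  haveI : Nonempty {w : X // (x, w) ∈ p ∧ (w, y) ∈ q} := ⟨⟨z, h1, h2⟩⟩
  exact Nat.card_pos

lemma IsScheme.exists_pimg [Finite X] (hS : IsScheme S) {t : Set (X × X)}
    (ht : t ∈ S) (x : X) : ∃ y, (x, y) ∈ t := by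
  obtain ⟨⟨a, b⟩, hab⟩ := hS.1 t ht
  have hpos : 0 < aC t (transp t) (diagRel X) :=
    hS.aC_pos ht (hS.transp_mem ht) hS.2.2.1 hab (mem_transp.mpr hab) rfl
  obtain ⟨z, hz, -⟩ := hS.exists_mid ht (hS.transp_mem ht) hS.2.2.1 hpos
    (show (x, x) ∈ diagRel X from rfl)
  exact ⟨z, hz⟩

lemma IsScheme.nval_eq_card [Finite X] (hS : IsScheme S) {t : Set (X × X)}
    (ht : t ∈ S) (x : X) : nval t = (pimg t x).ncard := by
  have h := hS.card_eq ht (hS.transp_mem ht) hS.2.2.1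
    (show (x, x) ∈ diagRel X from rfl)
  rw [nval, ← h, ← Nat.card_coe_set_eq]
  apply Nat.card_congr
  apply Equiv.subtypeEquivRight
  intro z
  simp [pimg, mem_transp]

lemma IsScheme.nval_diagRel [Finite X] (hS : IsScheme S) (x : X) :
    nval (diagRel X) = 1 := by
  rw [hS.nval_eq_card hS.2.2.1 x]
  have : pimg (diagRel X) x = {x} := by
    ext z; simp [pimg, mem_diagRel, eq_comm]
  rw [this, Set.ncard_singleton]

end SchemeAux

lemma ncard_biUnion' {α ι : Type} [Finite α] (I : Finset ι) (f : ι → Set α)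
    (h : ∀ i ∈ I, ∀ j ∈ I, i ≠ j → ∀ a, a ∈ f i → a ∉ f j) :
    (⋃ i ∈ I, f i).ncard = ∑ i ∈ I, (f i).ncard := by
  classical
  induction I using Finset.induction_on with
  | empty => simp
  | @insert a I ha ih =>
    rw [Finset.set_biUnion_insert, Finset.sum_insert ha,
      Set.ncard_union_eq ?_, ih ?_]
    · intro i hi j hj hij
      exact h i (Finset.mem_insert_of_mem hi) j (Finset.mem_insert_of_mem hj) hij
    · rw [Set.disjoint_left]
      intro x hx hx'
      obtain ⟨i, hi, hxi⟩ := Set.mem_iUnion₂.mp hx'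
      exact h a (Finset.mem_insert_self a I) i (Finset.mem_insert_of_mem hi)
        (fun he => ha (he ▸ hi)) x hx hxi
/-- Packaged extension setup. -/
structure ECtx where
  U : BScheme
  Sch : BScheme
  Tt : Set (Set (Sch.X × Sch.X))
  hTt : IsClosedIn Sch.S Tt
  TtNe : Tt.Nonempty
  i : U.X → Sch.X
  hipi : IsBasedIsoOn (fullPres U.S U.base) (quotPres Sch.S Tt Sch.base)
    (fun y => coset Tt (i y))
  iS : Set (U.X × U.X) → Set (Sch.X × Sch.X)
  hiS : ∀ u ∈ U.S, iS u ∈ Sch.S ∧ elemMapsTo i u (iS u)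
  hcond : ∀ u ∈ U.S, ∀ t ∈ Tt, ∃! s, s ∈ cmulS Sch.S t (iS u)

namespace ECtx

variable (c : ECtx)

lemma hS : IsScheme c.Sch.S := c.Sch.isScheme

lemma hU : IsScheme c.U.S := c.U.isScheme

lemma finZ : Finite c.Sch.X := @Finite.of_fintype _ c.Sch.fin

lemma finY : Finite c.U.X := @Finite.of_fintype _ c.U.fin

lemma TtS {t : Set (c.Sch.X × c.Sch.X)} (h : t ∈ c.Tt) : t ∈ c.Sch.S := c.hTt.1 h

lemma iS_mem {u : Set (c.U.X × c.U.X)} (hu : u ∈ c.U.S) : c.iS u ∈ c.Sch.S :=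
  (c.hiS u hu).1

lemma iS_maps {u : Set (c.U.X × c.U.X)} (hu : u ∈ c.U.S) {y y' : c.U.X}
    (h : (y, y') ∈ u) : (c.i y, c.i y') ∈ c.iS u :=
  (c.hiS u hu).2 (y, y') h

lemma diag_mem_Tt : diagRel c.Sch.X ∈ c.Tt := by
  haveI := c.finZ
  obtain ⟨t0, ht0⟩ := c.TtNe
  obtain ⟨⟨x, y⟩, hxy⟩ := c.hS.1 t0 (c.TtS ht0)
  apply c.hTt.2 t0 ht0 t0 ht0
  exact ⟨c.hS.2.2.1, c.hS.aC_pos (c.hS.transp_mem (c.TtS ht0)) (c.TtS ht0)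
    c.hS.2.2.1 (mem_transp.mpr hxy) hxy rfl⟩

lemma transp_mem_Tt {t : Set (c.Sch.X × c.Sch.X)} (ht : t ∈ c.Tt) :
    transp t ∈ c.Tt := by
  haveI := c.finZ
  obtain ⟨⟨x, y⟩, hxy⟩ := c.hS.1 t (c.TtS ht)
  apply c.hTt.2 t ht (diagRel c.Sch.X) c.diag_mem_Tt
  exact ⟨c.hS.transp_mem (c.TtS ht), c.hS.aC_pos (c.hS.transp_mem (c.TtS ht))
    c.hS.2.2.1 (c.hS.transp_mem (c.TtS ht)) (mem_transp.mpr hxy) rfl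
    (mem_transp.mpr hxy)⟩

lemma tri_mem_Tt {t1 t2 s : Set (c.Sch.X × c.Sch.X)} (h1 : t1 ∈ c.Tt)
    (h2 : t2 ∈ c.Tt) (hs : s ∈ c.Sch.S) {x y w : c.Sch.X}
    (hxy : (x, y) ∈ t1) (hyw : (y, w) ∈ t2) (hxw : (x, w) ∈ s) : s ∈ c.Tt := by
  haveI := c.finZ
  apply c.hTt.2 (transp t1) (c.transp_mem_Tt h1) t2 h2
  rw [transp_transp]
  exact ⟨hs, c.hS.aC_pos (c.TtS h1) (c.TtS h2) hs hxy hyw hxw⟩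

lemma mem_coset_self (x : c.Sch.X) : x ∈ coset c.Tt x :=
  ⟨diagRel c.Sch.X, c.diag_mem_Tt, rfl⟩

lemma exists_rel_of_coset_eq {x y : c.Sch.X}
    (h : coset c.Tt x = coset c.Tt y) : ∃ t ∈ c.Tt, (x, y) ∈ t := by
  have : y ∈ coset c.Tt x := h ▸ c.mem_coset_self y
  exact this

lemma coset_eq_of_rel {t : Set (c.Sch.X × c.Sch.X)} (ht : t ∈ c.Tt)
    {x y : c.Sch.X} (hxy : (x, y) ∈ t) : coset c.Tt x = coset c.Tt y := by
  ext w
  constructor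
  · rintro ⟨t', ht', hxw⟩
    obtain ⟨s, hsS, hyw⟩ := c.hS.exists_rel (y, w)
    exact ⟨s, c.tri_mem_Tt (c.transp_mem_Tt ht) ht' hsS (mem_transp.mpr hxy)
      hxw hyw, hyw⟩
  · rintro ⟨t', ht', hyw⟩
    obtain ⟨s, hsS, hxw⟩ := c.hS.exists_rel (x, w)
    exact ⟨s, c.tri_mem_Tt ht ht' hsS hxy hyw hxw, hxw⟩

lemma iS_transp {u : Set (c.U.X × c.U.X)} (hu : u ∈ c.U.S) :
    c.iS (transp u) = transp (c.iS u) := by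
  obtain ⟨⟨a, b⟩, hab⟩ := c.hU.1 u hu
  exact c.hS.rel_unique (c.iS_mem (c.hU.transp_mem hu))
    (c.hS.transp_mem (c.iS_mem hu))
    (c.iS_maps (c.hU.transp_mem hu) (mem_transp.mpr hab))
    (mem_transp.mpr (c.iS_maps hu hab))

lemma cm_unique {u t : Set _} (hu : u ∈ c.U.S) (ht : t ∈ c.Tt)
    {s s' : Set (c.Sch.X × c.Sch.X)} (hs : s ∈ cmulS c.Sch.S t (c.iS u))
    (hs' : s' ∈ cmulS c.Sch.S t (c.iS u)) : s = s' := by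
  obtain ⟨s0, -, h0⟩ := c.hcond u hu t ht
  rw [h0 s hs, h0 s' hs']

lemma left_singleton {u t : Set _} (hu : u ∈ c.U.S) (ht : t ∈ c.Tt)
    (hpos : 0 < aC t (c.iS u) (c.iS u)) :
    cmulS c.Sch.S t (c.iS u) = {c.iS u} := by
  ext s
  simp only [Set.mem_singleton_iff]
  constructor
  · intro hs
    exact c.cm_unique hu ht hs ⟨c.iS_mem hu, hpos⟩
  · rintro rfl
    exact ⟨c.iS_mem hu, hpos⟩

lemma right_singleton {u t : Set _} (hu : u ∈ c.U.S) (ht : t ∈ c.Tt)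
    (hpos : 0 < aC (c.iS u) t (c.iS u)) :
    cmulS c.Sch.S (c.iS u) t = {c.iS u} := by
  haveI := c.finZ
  have hmem : ∀ s ∈ cmulS c.Sch.S (c.iS u) t,
      transp s ∈ cmulS c.Sch.S (transp t) (c.iS (transp u)) := by
    rintro s ⟨hsS, hsp⟩
    obtain ⟨⟨x, y⟩, hxy⟩ := c.hS.1 s hsS
    obtain ⟨z, hz1, hz2⟩ := c.hS.exists_mid (c.iS_mem hu) (c.TtS ht) hsS hsp hxy
    refine ⟨c.hS.transp_mem hsS, ?_⟩
    rw [c.iS_transp hu]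
    exact c.hS.aC_pos (c.hS.transp_mem (c.TtS ht))
      (c.hS.transp_mem (c.iS_mem hu)) (c.hS.transp_mem hsS)
      (mem_transp.mpr hz2) (mem_transp.mpr hz1) (mem_transp.mpr hxy)
  ext s
  simp only [Set.mem_singleton_iff]
  constructor
  · intro hs
    have h1 := hmem s hs
    have h2 := hmem (c.iS u) ⟨c.iS_mem hu, hpos⟩
    have := c.cm_unique (c.hU.transp_mem hu) (c.transp_mem_Tt ht) h1 h2
    calc s = transp (transp s) := (transp_transp s).symm
    _ = transp (transp (c.iS u)) := by rw [this]
    _ = c.iS u := transp_transp _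
  · rintro rfl
    exact ⟨c.iS_mem hu, hpos⟩

lemma transp_left_pos {u t : Set _} (hu : u ∈ c.U.S) (ht : t ∈ c.Tt)
    (h : cmulS c.Sch.S t (c.iS u) = {c.iS u}) :
    0 < aC (transp t) (c.iS u) (c.iS u) := by
  haveI := c.finZ
  have hm : c.iS u ∈ cmulS c.Sch.S t (c.iS u) := by rw [h]; rfl
  obtain ⟨⟨x, y⟩, hxy⟩ := c.hS.1 (c.iS u) (c.iS_mem hu)
  obtain ⟨z, hz1, hz2⟩ := c.hS.exists_mid (c.TtS ht) (c.iS_mem hu)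
    (c.iS_mem hu) hm.2 hxy
  exact c.hS.aC_pos (c.hS.transp_mem (c.TtS ht)) (c.iS_mem hu) (c.iS_mem hu)
    (mem_transp.mpr hz1) hxy hz2

end ECtx
namespace ECtx

variable (c : ECtx)

lemma coset_i_inj {y y' : c.U.X}
    (h : coset c.Tt (c.i y) = coset c.Tt (c.i y')) : y = y' :=
  c.hipi.1.2.1.2.1 (Set.mem_univ y) (Set.mem_univ y') h

lemma coset_i_surj (z : c.Sch.X) :
    ∃ y, coset c.Tt (c.i y) = coset c.Tt z := by
  obtain ⟨y, -, hy⟩ := c.hipi.1.2.1.2.2 (show coset c.Tt z ∈ cosets c.Tt from ⟨z, rfl⟩)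
  exact ⟨y, hy⟩

/-- Key uniqueness lemma: if `(a,b) ∈ iS u` with `a, b` in the cosets of
`i ya, i yb`, then the scheme element of `U` containing `(ya, yb)` is `u`. -/
lemma LQ {u u'' : Set (c.U.X × c.U.X)} (hu : u ∈ c.U.S) (hu'' : u'' ∈ c.U.S)
    {a b : c.Sch.X} {ya yb : c.U.X} (hab : (a, b) ∈ c.iS u)
    (hca : coset c.Tt a = coset c.Tt (c.i ya))
    (hcb : coset c.Tt b = coset c.Tt (c.i yb))
    (hyab : (ya, yb) ∈ u'') : u'' = u := by
  haveI := c.finZ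
  obtain ⟨t1, ht1, hat1⟩ := c.exists_rel_of_coset_eq hca
  obtain ⟨t2, ht2, hbt2⟩ := c.exists_rel_of_coset_eq hcb
  obtain ⟨s0, hs0, hs0u⟩ := c.hcond u hu (transp t1) (c.transp_mem_Tt ht1)
  have hs0S : s0 ∈ c.Sch.S := hs0.1
  -- (i ya, b) ∈ s0
  obtain ⟨sb, hsbS, hsbm⟩ := c.hS.exists_rel (c.i ya, b)
  have hsb : sb = s0 := hs0u sb ⟨hsbS, c.hS.aC_pos
    (c.hS.transp_mem (c.TtS ht1)) (c.iS_mem hu) hsbS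
    (mem_transp.mpr hat1) hab hsbm⟩
  have hyb : (c.i ya, b) ∈ s0 := hsb ▸ hsbm
  -- a_{s0, t2, iS u''} > 0
  have h2 : 0 < aC s0 t2 (c.iS u'') := c.hS.aC_pos hs0S (c.TtS ht2)
    (c.iS_mem hu'') hyb hbt2 (c.iS_maps hu'' hyab)
  -- u'' maps into quotRel Tt (iS u)
  have hm'' : elemMapsTo (fun y => coset c.Tt (c.i y)) u''
      (quotRel c.Tt (c.iS u)) := by
    intro w hw
    obtain ⟨b', hb1, hb2⟩ := c.hS.exists_mid hs0S (c.TtS ht2)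
      (c.iS_mem hu'') h2 (c.iS_maps hu'' hw)
    obtain ⟨a', ha1, ha2⟩ := c.hS.exists_mid
      (c.hS.transp_mem (c.TtS ht1)) (c.iS_mem hu) hs0S hs0.2 hb1
    exact ⟨c.i w.1, c.i w.2, rfl, (a', b'), ha2,
      ⟨transp t1, c.transp_mem_Tt ht1, ha1⟩,
      ⟨transp t2, c.transp_mem_Tt ht2, mem_transp.mpr hb2⟩⟩
  have hmu : elemMapsTo (fun y => coset c.Tt (c.i y)) u
      (quotRel c.Tt (c.iS u)) := by
    intro w hw
    exact ⟨c.i w.1, c.i w.2, rfl, (c.i w.1, c.i w.2), c.iS_maps hu hw,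
      c.mem_coset_self _, c.mem_coset_self _⟩
  obtain ⟨s, -, huniq⟩ := c.hipi.1.2.2 (quotRel c.Tt (c.iS u))
    ⟨c.iS u, c.iS_mem hu, rfl⟩
  exact (huniq u'' ⟨hu'', hm''⟩).trans (huniq u ⟨hu, hmu⟩).symm

end ECtx
namespace ECtx

variable (c : ECtx)

/-- The set `T̃''_p ∩ T̃'_q`. -/
def Kset (p q : Set (c.U.X × c.U.X)) : Set (Set (c.Sch.X × c.Sch.X)) :=
  {t | t ∈ c.Tt ∧ cmulS c.Sch.S (c.iS p) t = {c.iS p}} ∩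
  {t | t ∈ c.Tt ∧ cmulS c.Sch.S t (c.iS q) = {c.iS q}}

lemma Kset_finite (p q : Set (c.U.X × c.U.X)) : (c.Kset p q).Finite := by
  haveI := c.finZ
  exact Set.toFinite _

lemma diag_mem_Kset {p q : Set (c.U.X × c.U.X)} (hp : p ∈ c.U.S)
    (hq : q ∈ c.U.S) : diagRel c.Sch.X ∈ c.Kset p q := by
  haveI := c.finZ
  refine ⟨⟨c.diag_mem_Tt, ?_⟩, ⟨c.diag_mem_Tt, ?_⟩⟩
  · obtain ⟨⟨x, y⟩, hxy⟩ := c.hS.1 (c.iS p) (c.iS_mem hp)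
    exact c.right_singleton hp c.diag_mem_Tt
      (c.hS.aC_pos (c.iS_mem hp) c.hS.2.2.1 (c.iS_mem hp) hxy rfl hxy)
  · obtain ⟨⟨x, y⟩, hxy⟩ := c.hS.1 (c.iS q) (c.iS_mem hq)
    exact c.left_singleton hq c.diag_mem_Tt
      (c.hS.aC_pos c.hS.2.2.1 (c.iS_mem hq) (c.iS_mem hq) rfl hxy hxy)

/-- The fiber over `z2s` is exactly the union of the `Kset`-blocks at `z2s`. -/
lemma mem_fiber_iff {p q : Set (c.U.X × c.U.X)} (hp : p ∈ c.U.S)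
    (hq : q ∈ c.U.S) {z1 z3 z2s z2 : c.Sch.X}
    (h1 : (z1, z2s) ∈ c.iS p) (h2 : (z2s, z3) ∈ c.iS q) :
    ((z1, z2) ∈ c.iS p ∧ (z2, z3) ∈ c.iS q ∧
      coset c.Tt z2 = coset c.Tt z2s) ↔
    ∃ t ∈ c.Kset p q, (z2s, z2) ∈ t := by
  haveI := c.finZ
  constructor
  · rintro ⟨hz1, hz3, hcos⟩
    obtain ⟨t, ht, hmt⟩ := c.exists_rel_of_coset_eq hcos.symm
    refine ⟨t, ⟨⟨ht, ?_⟩, ⟨ht, ?_⟩⟩, hmt⟩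
    · exact c.right_singleton hp ht
        (c.hS.aC_pos (c.iS_mem hp) (c.TtS ht) (c.iS_mem hp) h1 hmt hz1)
    · exact c.left_singleton hq ht
        (c.hS.aC_pos (c.TtS ht) (c.iS_mem hq) (c.iS_mem hq) hmt hz3 h2)
  · rintro ⟨t, ⟨⟨ht, hKp⟩, ⟨-, hKq⟩⟩, hmt⟩
    have hz1 : (z1, z2) ∈ c.iS p := by
      obtain ⟨s, hsS, hsm⟩ := c.hS.exists_rel (z1, z2)
      have : s ∈ cmulS c.Sch.S (c.iS p) t :=
        ⟨hsS, c.hS.aC_pos (c.iS_mem hp) (c.TtS ht) hsS h1 hmt hsm⟩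
      rw [hKp, Set.mem_singleton_iff] at this
      exact this ▸ hsm
    have hz3 : (z2, z3) ∈ c.iS q := by
      have hts := c.left_singleton hq (c.transp_mem_Tt ht)
        (c.transp_left_pos hq ht hKq)
      obtain ⟨s, hsS, hsm⟩ := c.hS.exists_rel (z2, z3)
      have : s ∈ cmulS c.Sch.S (transp t) (c.iS q) :=
        ⟨hsS, c.hS.aC_pos (c.hS.transp_mem (c.TtS ht)) (c.iS_mem hq) hsS
          (mem_transp.mpr hmt) h2 hsm⟩
      rw [hts, Set.mem_singleton_iff] at this
      exact this ▸ hsm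
    exact ⟨hz1, hz3, (c.coset_eq_of_rel ht hmt).symm⟩

/-- Size of a nonempty fiber. -/
lemma fiber_ncard {p q : Set (c.U.X × c.U.X)} (hp : p ∈ c.U.S)
    (hq : q ∈ c.U.S) {z1 z3 z2s : c.Sch.X}
    (h1 : (z1, z2s) ∈ c.iS p) (h2 : (z2s, z3) ∈ c.iS q) :
    {z2 | (z1, z2) ∈ c.iS p ∧ (z2, z3) ∈ c.iS q ∧
      coset c.Tt z2 = coset c.Tt z2s}.ncard = ∑ᶠ t ∈ c.Kset p q, nval t := by
  haveI := c.finZ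
  have hfin := c.Kset_finite p q
  have hset : {z2 | (z1, z2) ∈ c.iS p ∧ (z2, z3) ∈ c.iS q ∧
      coset c.Tt z2 = coset c.Tt z2s} =
      ⋃ t ∈ hfin.toFinset, pimg t z2s := by
    ext z2
    simp only [Set.mem_setOf_eq, Set.mem_iUnion, Set.Finite.mem_toFinset,
      exists_prop]
    rw [c.mem_fiber_iff hp hq h1 h2]
    rfl
  rw [hset, ncard_biUnion' _ _ ?_]
  · conv_rhs => rw [← Set.Finite.coe_toFinset hfin, finsum_mem_coe_finset]
    apply Finset.sum_congr rfl
    intro t ht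
    rw [Set.Finite.mem_toFinset] at ht
    exact (c.hS.nval_eq_card (c.TtS ht.1.1) z2s).symm
  · intro t ht t' ht' htt' a hat hat'
    rw [Set.Finite.mem_toFinset] at ht ht'
    exact htt' (c.hS.rel_unique (c.TtS ht.1.1) (c.TtS ht'.1.1) hat hat')

end ECtx
namespace ECtx

variable (c : ECtx)

/-- Partition of the solution set into fibers indexed by `y2`. -/
lemma ncard_big {p q : Set (c.U.X × c.U.X)} (hp : p ∈ c.U.S) (hq : q ∈ c.U.S)
    {z1 z3 : c.Sch.X} {y1 y3 : c.U.X}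
    (hy1 : coset c.Tt z1 = coset c.Tt (c.i y1))
    (hy3 : coset c.Tt z3 = coset c.Tt (c.i y3))
    (hYfin : {y2 | (y1, y2) ∈ p ∧ (y2, y3) ∈ q}.Finite) :
    {z2 | (z1, z2) ∈ c.iS p ∧ (z2, z3) ∈ c.iS q}.ncard =
      ∑ y2 ∈ hYfin.toFinset,
        {z2 | (z1, z2) ∈ c.iS p ∧ (z2, z3) ∈ c.iS q ∧
          coset c.Tt z2 = coset c.Tt (c.i y2)}.ncard := by
  haveI := c.finZ
  have hcover : {z2 | (z1, z2) ∈ c.iS p ∧ (z2, z3) ∈ c.iS q} =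
      ⋃ y2 ∈ hYfin.toFinset,
        {z2 | (z1, z2) ∈ c.iS p ∧ (z2, z3) ∈ c.iS q ∧
          coset c.Tt z2 = coset c.Tt (c.i y2)} := by
    ext z2
    simp only [Set.mem_setOf_eq, Set.mem_iUnion, Set.Finite.mem_toFinset,
      exists_prop]
    constructor
    · rintro ⟨hzp, hzq⟩
      obtain ⟨y2, hy2⟩ := c.coset_i_surj z2
      have hyp2 : (y1, y2) ∈ p := by
        obtain ⟨u'', hu''S, hu''m⟩ := c.hU.exists_rel (y1, y2)
        exact (c.LQ hp hu''S hzp hy1 hy2.symm hu''m) ▸ hu''m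
      have hyq2 : (y2, y3) ∈ q := by
        obtain ⟨u'', hu''S, hu''m⟩ := c.hU.exists_rel (y2, y3)
        exact (c.LQ hq hu''S hzq hy2.symm hy3 hu''m) ▸ hu''m
      exact ⟨y2, ⟨hyp2, hyq2⟩, hzp, hzq, hy2.symm⟩
    · rintro ⟨y2, -, hzp, hzq, -⟩
      exact ⟨hzp, hzq⟩
  rw [hcover, ncard_biUnion']
  intro y2 hy2 y2' hy2' hne a ha ha'
  exact hne (c.coset_i_inj (ha.2.2.symm.trans ha'.2.2))

/-- The main structure constant identity. -/
lemma aC_iS_eq {p q r : Set (c.U.X × c.U.X)} (hp : p ∈ c.U.S) (hq : q ∈ c.U.S)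
    (hr : r ∈ c.U.S) :
    aC (c.iS p) (c.iS q) (c.iS r) =
      aC p q r * ∑ᶠ t ∈ c.Kset p q, nval t := by
  haveI := c.finZ
  haveI := c.finY
  obtain ⟨⟨y1, y3⟩, h13⟩ := c.hU.1 r hr
  have hz : (c.i y1, c.i y3) ∈ c.iS r := c.iS_maps hr h13
  have hYfin : {y2 | (y1, y2) ∈ p ∧ (y2, y3) ∈ q}.Finite := Set.toFinite _
  have hB : aC (c.iS p) (c.iS q) (c.iS r) =
      {z2 | (c.i y1, z2) ∈ c.iS p ∧ (z2, c.i y3) ∈ c.iS q}.ncard := by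
    rw [← c.hS.card_eq (c.iS_mem hp) (c.iS_mem hq) (c.iS_mem hr) hz,
      ← Nat.card_coe_set_eq]
    rfl
  rw [hB, c.ncard_big hp hq rfl rfl hYfin]
  have hterm : ∀ y2 ∈ hYfin.toFinset,
      {z2 | (c.i y1, z2) ∈ c.iS p ∧ (z2, c.i y3) ∈ c.iS q ∧
        coset c.Tt z2 = coset c.Tt (c.i y2)}.ncard =
      ∑ᶠ t ∈ c.Kset p q, nval t := by
    intro y2 hy2
    rw [Set.Finite.mem_toFinset] at hy2
    exact c.fiber_ncard hp hq (c.iS_maps hp hy2.1) (c.iS_maps hq hy2.2)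
  rw [Finset.sum_congr rfl hterm, Finset.sum_const, smul_eq_mul]
  congr 1
  rw [← Set.ncard_eq_toFinset_card _ hYfin, ← Nat.card_coe_set_eq]
  exact c.hU.card_eq hp hq hr h13

lemma nK_pos {p q : Set (c.U.X × c.U.X)} (hp : p ∈ c.U.S) (hq : q ∈ c.U.S) :
    0 < ∑ᶠ t ∈ c.Kset p q, nval t := by
  haveI := c.finZ
  have hfin := c.Kset_finite p q
  rw [← Set.Finite.coe_toFinset hfin, finsum_mem_coe_finset]
  have hd : diagRel c.Sch.X ∈ hfin.toFinset :=
    (Set.Finite.mem_toFinset hfin).mpr (c.diag_mem_Kset hp hq)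
  calc 0 < nval (diagRel c.Sch.X) := by
        rw [c.hS.nval_diagRel c.Sch.base]; exact one_pos
  _ ≤ _ := Finset.single_le_sum (fun t _ => Nat.zero_le _) hd

/-- Every fiber is nonempty. -/
lemma fiber_nonempty {p q r : Set (c.U.X × c.U.X)} (hp : p ∈ c.U.S)
    (hq : q ∈ c.U.S) (hr : r ∈ c.U.S) (hrpq : 0 < aC p q r)
    {z1 z3 : c.Sch.X} {y1 y3 y2 : c.U.X} (hz : (z1, z3) ∈ c.iS r)
    (hy1 : coset c.Tt z1 = coset c.Tt (c.i y1))
    (hy3 : coset c.Tt z3 = coset c.Tt (c.i y3))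
    (h2p : (y1, y2) ∈ p) (h2q : (y2, y3) ∈ q) :
    ∃ z2, (z1, z2) ∈ c.iS p ∧ (z2, z3) ∈ c.iS q ∧
      coset c.Tt z2 = coset c.Tt (c.i y2) := by
  classical
  haveI := c.finZ
  haveI := c.finY
  by_contra hcon
  have hfib0 : {z2 | (z1, z2) ∈ c.iS p ∧ (z2, z3) ∈ c.iS q ∧
      coset c.Tt z2 = coset c.Tt (c.i y2)} = ∅ := by
    ext z2
    simp only [Set.mem_setOf_eq, Set.mem_empty_iff_false, iff_false]
    intro h
    exact hcon ⟨z2, h⟩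
  have h13 : (y1, y3) ∈ r := by
    obtain ⟨u'', hu''S, hu''m⟩ := c.hU.exists_rel (y1, y3)
    exact (c.LQ hr hu''S hz hy1 hy3 hu''m) ▸ hu''m
  have hYfin : {y2' | (y1, y2') ∈ p ∧ (y2', y3) ∈ q}.Finite := Set.toFinite _
  set nK := ∑ᶠ t ∈ c.Kset p q, nval t with hnK
  have hkpos : 0 < nK := c.nK_pos hp hq
  have hBval : {z2 | (z1, z2) ∈ c.iS p ∧ (z2, z3) ∈ c.iS q}.ncard =
      aC p q r * nK := by
    rw [← Nat.card_coe_set_eq]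
    have : Nat.card {z2 // (z1, z2) ∈ c.iS p ∧ (z2, z3) ∈ c.iS q} =
        aC (c.iS p) (c.iS q) (c.iS r) :=
      c.hS.card_eq (c.iS_mem hp) (c.iS_mem hq) (c.iS_mem hr) hz
    rw [show Nat.card {z2 // z2 ∈ {z2 | (z1, z2) ∈ c.iS p ∧ (z2, z3) ∈ c.iS q}}
        = Nat.card {z2 // (z1, z2) ∈ c.iS p ∧ (z2, z3) ∈ c.iS q} from rfl, this,
      c.aC_iS_eq hp hq hr]
  have hbig := c.ncard_big hp hq hy1 hy3 hYfin
  have hy2mem : y2 ∈ hYfin.toFinset :=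
    (Set.Finite.mem_toFinset hYfin).mpr ⟨h2p, h2q⟩
  have hle : ∀ y' ∈ hYfin.toFinset.erase y2,
      {z2 | (z1, z2) ∈ c.iS p ∧ (z2, z3) ∈ c.iS q ∧
        coset c.Tt z2 = coset c.Tt (c.i y')}.ncard ≤ nK := by
    intro y' hy'
    rcases Set.eq_empty_or_nonempty {z2 | (z1, z2) ∈ c.iS p ∧
        (z2, z3) ∈ c.iS q ∧ coset c.Tt z2 = coset c.Tt (c.i y')} with h | h
    · rw [h, Set.ncard_empty]; exact Nat.zero_le _
    · obtain ⟨z2s, hz2s⟩ := h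
      have hsets : {z2 | (z1, z2) ∈ c.iS p ∧ (z2, z3) ∈ c.iS q ∧
          coset c.Tt z2 = coset c.Tt (c.i y')} =
          {z2 | (z1, z2) ∈ c.iS p ∧ (z2, z3) ∈ c.iS q ∧
          coset c.Tt z2 = coset c.Tt z2s} := by
        ext z2
        simp only [Set.mem_setOf_eq, hz2s.2.2]
      rw [hsets, c.fiber_ncard hp hq hz2s.1 hz2s.2.1]
  have hsum : aC p q r * nK =
      ∑ y' ∈ hYfin.toFinset,
        {z2 | (z1, z2) ∈ c.iS p ∧ (z2, z3) ∈ c.iS q ∧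
          coset c.Tt z2 = coset c.Tt (c.i y')}.ncard := by
    rw [← hbig, hBval]
  rw [← Finset.add_sum_erase _ _ hy2mem, hfib0, Set.ncard_empty, zero_add]
    at hsum
  have hbound := Finset.sum_le_card_nsmul (hYfin.toFinset.erase y2) _ nK hle
  rw [← hsum, Finset.card_erase_of_mem hy2mem, smul_eq_mul] at hbound
  have hYcard : hYfin.toFinset.card = aC p q r := by
    rw [← Set.ncard_eq_toFinset_card _ hYfin, ← Nat.card_coe_set_eq]
    exact c.hU.card_eq hp hq hr h13
  rw [hYcard] at hbound
  have h1 : (aC p q r - 1) * nK = aC p q r * nK - nK := by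
    rw [Nat.sub_one_mul]
  have h2 : nK ≤ aC p q r * nK := Nat.le_mul_of_pos_left nK hrpq
  omega

end ECtx
theorem stmt18
    (T U Sch : BScheme) (Tt : Set (Set (Sch.X × Sch.X)))
    (hTt : IsClosedIn Sch.S Tt)
    (hsub : ∃ g : Sch.X → T.X,
      IsBasedIsoOn (subPres Tt Sch.base) (fullPres T.S T.base) g)
    (i : U.X → Sch.X)
    (himor : IsMorOn (fullPres U.S U.base) (fullPres Sch.S Sch.base) i)
    (hibase : i U.base = Sch.base)
    (hipi : IsBasedIsoOn (fullPres U.S U.base) (quotPres Sch.S Tt Sch.base)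
      (fun y => coset Tt (i y)))
    (iS : Set (U.X × U.X) → Set (Sch.X × Sch.X))
    (hiS : ∀ u ∈ U.S, iS u ∈ Sch.S ∧ elemMapsTo i u (iS u))
    (hcond : ∀ u ∈ U.S, ∀ t ∈ Tt, ∃! s, s ∈ cmulS Sch.S t (iS u))
    (p q r : Set (U.X × U.X)) (hp : p ∈ U.S) (hq : q ∈ U.S) (hr : r ∈ U.S)
    (hrpq : r ∈ cmulS U.S p q)
    (z1 z3 : Sch.X) (hz3 : z3 ∈ pimg (iS r) z1)
    (y1 y3 : U.X)
    (hy1 : coset Tt z1 = coset Tt (i y1)) (hy3 : coset Tt z3 = coset Tt (i y3)) :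
    (∀ y2 ∈ pimg p y1 ∩ pimg (transp q) y3,
      ∃ z2, z2 ∈ pimg (iS p) z1 ∧ z2 ∈ pimg (transp (iS q)) z3 ∧
        coset Tt z2 = coset Tt (i y2)) ∧
    aC (iS p) (iS q) (iS r) =
      aC p q r *
        ∑ᶠ t ∈ ({t | t ∈ Tt ∧ cmulS Sch.S (iS p) t = {iS p}} ∩
                {t | t ∈ Tt ∧ cmulS Sch.S t (iS q) = {iS q}}), nval t := by
  obtain ⟨g, hg⟩ := hsub
  have TtNe : Tt.Nonempty := by
    obtain ⟨x, hx, -⟩ := hg.1.2.1.2.2 (Set.mem_univ T.base)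
    obtain ⟨t, ht, -⟩ := hx
    exact ⟨t, ht⟩
  let c : ECtx := ⟨U, Sch, Tt, hTt, TtNe, i, hipi, iS, hiS, hcond⟩
  have hrpos : 0 < aC p q r := hrpq.2
  have hz : (z1, z3) ∈ iS r := hz3
  constructor
  · rintro y2 ⟨hyp2, hyq2⟩
    have h2q : (y2, y3) ∈ q := mem_transp.mp hyq2
    obtain ⟨z2, h1, h2, h3⟩ :=
      c.fiber_nonempty hp hq hr hrpos hz hy1 hy3 hyp2 h2q
    exact ⟨z2, h1, mem_transp.mpr h2, h3⟩
  · exact c.aC_iS_eq hp hq hr
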